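/- arXiv:math/0003135 — 2 statements merged into one kernel-verified Lean document; each statement's English description precedes it below -/
import Mathlib

section
/- For all integers k ≥ 2 and all real ξ, the second central difference of p_k with unit step equals p_{k-1}: p_k(ξ+1) - 2 p_k(ξ) + p_k(ξ-1) = p_{k-1}(ξ). -/
/-!
`p_k(ξ)` is the generalized binomial coefficient `binom(ξ + k - 1, 2k - 1)`: its product is the
falling factorial of length `2k - 1` starting at `ξ + k - 1`. Shifting `ξ` shifts the top entry,
so the second central difference is Pascal's rule applied twice.
-/

noncomputable def pPoly (k : ℕ) (ξ : ℝ) : ℝ :=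
  (1 / (Nat.factorial (2 * k - 1) : ℝ)) *
    ∏ m ∈ Finset.Icc (-(k : ℤ) + 1) ((k : ℤ) - 1), (ξ - (m : ℝ))

open Finset Polynomial

theorem prod_Icc_sub_intCast_eq_descPochhammer_eval {R : Type*} [CommRing R] (n : ℕ) (x : R) :
    ∏ m ∈ Icc (-(n : ℤ)) n, (x - m) = (descPochhammer R (2 * n + 1)).eval (x + n) := by
  rw [descPochhammer_eval_eq_prod_range]
  refine prod_nbij' (fun m => (m + n).toNat) (fun j => (j : ℤ) - n) ?_ ?_ ?_ ?_ ?_ <;>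
    intro a ha <;> simp only [mem_Icc, mem_range] at ha ⊢
  · omega
  · omega
  · omega
  · omega
  · have h : (((a + n).toNat : ℕ) : R) = a + n := by
      exact_mod_cast congrArg (Int.cast (R := R)) (Int.toNat_of_nonneg (by omega : 0 ≤ a + n))
    rw [h]
    ring

theorem Ring.choose_second_difference {R : Type*} [NonAssocRing R] [Pow R ℕ] [NatPowAssoc R]
    [BinomialRing R] (r : R) (n : ℕ) :
    choose (r + 2) (n + 2) - 2 * choose (r + 1) (n + 2) + choose r (n + 2) = choose r n := by
  rw [show r + 2 = r + 1 + 1 by rw [add_assoc, one_add_one_eq_two], choose_succ_succ,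
    choose_succ_succ, choose_succ_succ]
  noncomm_ring

theorem pPoly_succ_eq_choose (n : ℕ) (ξ : ℝ) :
    pPoly (n + 1) ξ = Ring.choose (ξ + n) (2 * n + 1) := by
  rw [Ring.choose_eq_smul, ← aeval_eq_smeval, aeval_def, eval₂_eq_eval_map, descPochhammer_map,
    ← prod_Icc_sub_intCast_eq_descPochhammer_eval, pPoly, smul_eq_mul, one_div]
  congr 3 <;> push_cast <;> ring

theorem pPoly_second_difference (k : ℕ) (hk : 2 ≤ k) (ξ : ℝ) :
    pPoly k (ξ + 1) - 2 * pPoly k ξ + pPoly k (ξ - 1) = pPoly (k - 1) ξ := by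
  obtain ⟨n, rfl⟩ := Nat.exists_eq_add_of_le' hk
  simp only [pPoly_succ_eq_choose, show n + 1 + 1 - 1 = n + 1 from rfl]
  linear_combination (norm := (push_cast; ring_nf))
    Ring.choose_second_difference (ξ + n) (2 * n + 1)
end

section
/- For all integers k ≥ 2 and all real ξ, the second central difference of q_k equals q_{k-1}: q_k(ξ+1) - 2 q_k(ξ) + q_k(ξ-1) = q_{k-1}(ξ). -/
/-- The polynomial `q_k(ξ) = (ξ/(2k)) · p_k(ξ)` for `k ≥ 1`, with `q_0 ≡ 1`. -/
noncomputable def qPoly (k : ℕ) (ξ : ℝ) : ℝ :=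
  if k = 0 then 1 else ξ / (2 * k) * pPoly k ξ

/-!
Write `P_n(ξ) = ∏_{m=-n}^{n} (ξ - m)` (`centeredProd n ξ`), so that
`q_{n+1}(ξ) = ξ P_n(ξ) / (2n+2)!`.
Shifting `ξ` by `±1` shifts the range of the product, so `P_{n+1}(ξ+1)`, `P_{n+1}(ξ)` and
`P_{n+1}(ξ-1)` are each `P_n(ξ)` times two linear factors. The second difference of
`ξ P_{n+1}(ξ)` is therefore `P_n(ξ)` times a cubic, which turns out to be `(2n+3)(2n+4) ξ`;
these two factors are exactly the ratio `(2n+4)! / (2n+2)!`.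
-/

open Finset

namespace Finset

variable {M : Type*} [CommMonoid M]

theorem prod_Icc_int_add_one_right {a b : ℤ} (h : a ≤ b + 1) (f : ℤ → M) :
    ∏ m ∈ Icc a (b + 1), f m = f (b + 1) * ∏ m ∈ Icc a b, f m := by
  rw [← insert_Icc_right_eq_Icc_add_one h, prod_insert (by simp)]

theorem prod_Icc_int_sub_one_left {a b : ℤ} (h : a - 1 ≤ b) (f : ℤ → M) :
    ∏ m ∈ Icc (a - 1) b, f m = f (a - 1) * ∏ m ∈ Icc a b, f m := by
  rw [← insert_Icc_left_eq_Icc_sub_one h, prod_insert (by simp)]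

theorem prod_Icc_int_add_right (a b c : ℤ) (f : ℤ → M) :
    ∏ m ∈ Icc a b, f (m + c) = ∏ m ∈ Icc (a + c) (b + c), f m := by
  rw [← map_add_right_Icc, prod_map]
  rfl

end Finset

noncomputable def centeredProd (n : ℕ) (ξ : ℝ) : ℝ :=
  ∏ m ∈ Icc (-(n : ℤ)) n, (ξ - m)

theorem prod_Icc_add_intCast_sub (a b c : ℤ) (ξ : ℝ) :
    ∏ m ∈ Icc a b, (ξ + c - m) = ∏ m ∈ Icc (a - c) (b - c), (ξ - m) := by
  have h := prod_Icc_int_add_right (a - c) (b - c) c fun m => ξ + c - m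
  rw [sub_add_cancel, sub_add_cancel] at h
  rw [← h]
  refine prod_congr rfl fun m _ => ?_
  push_cast
  ring

theorem centeredProd_succ (n : ℕ) (ξ : ℝ) :
    centeredProd (n + 1) ξ = (ξ + (n + 1)) * (ξ - (n + 1)) * centeredProd n ξ := by
  have h := prod_Icc_int_sub_one_left (a := -(n : ℤ)) (b := n + 1) (by omega) fun m => ξ - m
  rw [centeredProd, centeredProd, Nat.cast_succ, neg_add', h,
    prod_Icc_int_add_one_right (by omega)]
  push_cast
  ring

theorem centeredProd_succ_add_one (n : ℕ) (ξ : ℝ) :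
    centeredProd (n + 1) (ξ + 1) = (ξ + (n + 2)) * (ξ + (n + 1)) * centeredProd n ξ := by
  have h := prod_Icc_add_intCast_sub (-(n + 1 : ℕ)) (n + 1 : ℕ) 1 ξ
  push_cast at h
  rw [centeredProd, Nat.cast_succ, h, add_sub_cancel_right,
    show -((n : ℤ) + 1) - 1 = -n - 1 - 1 by ring,
    prod_Icc_int_sub_one_left (by omega), prod_Icc_int_sub_one_left (by omega), centeredProd]
  push_cast
  ring

theorem centeredProd_succ_sub_one (n : ℕ) (ξ : ℝ) :
    centeredProd (n + 1) (ξ - 1) = (ξ - (n + 1)) * (ξ - (n + 2)) * centeredProd n ξ := by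
  have h := prod_Icc_add_intCast_sub (-(n + 1 : ℕ)) (n + 1 : ℕ) (-1) ξ
  push_cast at h
  rw [centeredProd, Nat.cast_succ, sub_eq_add_neg ξ 1, h, show -((n : ℤ) + 1) - -1 = -n by ring,
    show (n : ℤ) + 1 - -1 = n + 1 + 1 by ring,
    prod_Icc_int_add_one_right (by omega), prod_Icc_int_add_one_right (by omega), centeredProd]
  push_cast
  ring

theorem second_difference_mul_centeredProd (n : ℕ) (ξ : ℝ) :
    (ξ + 1) * centeredProd (n + 1) (ξ + 1) - 2 * (ξ * centeredProd (n + 1) ξ)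
        + (ξ - 1) * centeredProd (n + 1) (ξ - 1)
      = (2 * n + 4) * (2 * n + 3) * (ξ * centeredProd n ξ) := by
  rw [centeredProd_succ_add_one, centeredProd_succ, centeredProd_succ_sub_one]
  ring

theorem qPoly_succ (n : ℕ) (ξ : ℝ) :
    qPoly (n + 1) ξ = ξ * centeredProd n ξ / (2 * n + 2).factorial := by
  have hbounds : -((n + 1 : ℕ) : ℤ) + 1 = -n ∧ ((n + 1 : ℕ) : ℤ) - 1 = n := by omega
  rw [qPoly, if_neg n.succ_ne_zero, pPoly, hbounds.1, hbounds.2, ← centeredProd,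
    show 2 * (n + 1) - 1 = 2 * n + 1 by omega, Nat.factorial_succ (2 * n + 1)]
  push_cast
  field_simp
  ring

theorem qPoly_second_difference (k : ℕ) (hk : 2 ≤ k) (ξ : ℝ) :
    qPoly k (ξ + 1) - 2 * qPoly k ξ + qPoly k (ξ - 1) = qPoly (k - 1) ξ := by
  obtain ⟨n, rfl⟩ : ∃ n, k = n + 1 + 1 := ⟨k - 2, by omega⟩
  have hfactorial : ((2 * (n + 1) + 2).factorial : ℝ)
      = (2 * n + 4) * (2 * n + 3) * (2 * n + 2).factorial := by
    rw [show 2 * (n + 1) + 2 = 2 * n + 2 + 1 + 1 by ring, Nat.factorial_succ, Nat.factorial_succ]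
    push_cast
    ring
  rw [Nat.add_sub_cancel, qPoly_succ, qPoly_succ, qPoly_succ, qPoly_succ, hfactorial]
  calc _ = ((ξ + 1) * centeredProd (n + 1) (ξ + 1) - 2 * (ξ * centeredProd (n + 1) ξ)
          + (ξ - 1) * centeredProd (n + 1) (ξ - 1))
          / ((2 * n + 4) * (2 * n + 3) * (2 * n + 2).factorial) := by ring
    _ = _ := by
      rw [second_difference_mul_centeredProd]
      field_simp
end
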